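/- Let p be an odd prime, let B = (𝔽_p³, +, ∘) be the skew brace with (x₁,x₂,x₃) ∘ (y₁,y₂,y₃) = (x₁ + y₁ + x₃y₂, x₂ + y₂, x₃ + y₃), and for x ∈ 𝔽_p³ let λ_x ∈ GL₃(𝔽_p) be the matrix [[1, x₃, 0],[0,1,0],[0,0,1]]. Fix ε ∈ {−1,1}, δ₂ ∈ 𝔽_pˣ, δ₁, δ₃, δ₄ ∈ 𝔽_p, and define, for c ∈ 𝔽₂, φ_c = P^c, γ_c = Q^c, ψ_c = R^c, where P = [[−1, (1/2)δ₁δ₂, δ₁],[0,−1,0],[0,δ₂,1]], Q = [[ε, δ₃, −(1/2)(ε+1)δ₁],[0,−ε,0],[0,(1/2)(ε−1)δ₂,−1]], R = [[1, δ₄, −(1/2)δ₁],[0,−1,0],[0,0,−1]] (each of P, Q, R has order dividing 2). Then for all x ∈ 𝔽_p³ and all c, c' ∈ 𝔽₂: γ_c λ_{ψ_c⁻¹(x)} = λ_x γ_c, φ_c λ_x = λ_x φ_c, φ_c γ_{c'} = γ_{c'} φ_c, and φ_{c'}(γ_{c+c'}ψ_{c+c'}⁻¹ − γ_{c'}ψ_{c'}⁻¹)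 = γ_c ψ_c⁻¹ − I₃ as matrices. -/
import Mathlib

/-- The matrix of `λ_x` for the skew brace `(𝔽_p³, +, ∘)` with
`(x₁,x₂,x₃) ∘ (y₁,y₂,y₃) = (x₁ + y₁ + x₃y₂, x₂ + y₂, x₃ + y₃)`. -/
def lamMat {p : ℕ} (x : Fin 3 → ZMod p) : Matrix (Fin 3) (Fin 3) (ZMod p) :=
  !![1, x 2, 0; 0, 1, 0; 0, 0, 1]
/-- The matrix `P` defining `φ`. -/
def Pmat (p : ℕ) (δ₁ δ₂ : ZMod p) : Matrix (Fin 3) (Fin 3) (ZMod p) :=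
  !![-1, (2 : ZMod p)⁻¹ * (δ₁ * δ₂), δ₁; 0, -1, 0; 0, δ₂, 1]
/-- The matrix `Q` defining `γ`. -/
def Qmat (p : ℕ) (ε δ₁ δ₂ δ₃ : ZMod p) : Matrix (Fin 3) (Fin 3) (ZMod p) :=
  !![ε, δ₃, -((2 : ZMod p)⁻¹ * ((ε + 1) * δ₁)); 0, -ε, 0;
     0, (2 : ZMod p)⁻¹ * ((ε - 1) * δ₂), -1]
/-- The matrix `R` defining `ψ`. -/
def Rmat (p : ℕ) (δ₁ δ₄ : ZMod p) : Matrix (Fin 3) (Fin 3) (ZMod p) :=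
  !![1, δ₄, -((2 : ZMod p)⁻¹ * δ₁); 0, -1, 0; 0, 0, -1]

set_option maxHeartbeats 1000000 in
/-- The homomorphisms `φ_c = P^c`, `γ_c = Q^c`, `ψ_c = R^c` (for `c ∈ 𝔽₂`) satisfy
the four conditions of the semidirect-type construction:
`γ_c λ_{ψ_c⁻¹(x)} = λ_x γ_c`, `φ_c λ_x = λ_x φ_c`, `φ_c γ_{c'} = γ_{c'} φ_c`, and
`φ_{c'}(γ_{c+c'}ψ_{c+c'}⁻¹ − γ_{c'}ψ_{c'}⁻¹) = γ_c ψ_c⁻¹ − I₃`. -/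
theorem construction_conditions_odd_prime (p : ℕ) (hp : p.Prime) (hodd : Odd p)
    (ε : ZMod p) (hε : ε = 1 ∨ ε = -1) (δ₁ δ₂ δ₃ δ₄ : ZMod p) (hδ₂ : δ₂ ≠ 0) :
    (∀ (x : Fin 3 → ZMod p) (c : ZMod 2),
      Qmat p ε δ₁ δ₂ δ₃ ^ c.val * lamMat (((Rmat p δ₁ δ₄ ^ c.val)⁻¹).mulVec x) =
        lamMat x * Qmat p ε δ₁ δ₂ δ₃ ^ c.val) ∧
    (∀ (x : Fin 3 → ZMod p) (c : ZMod 2),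
      Pmat p δ₁ δ₂ ^ c.val * lamMat x = lamMat x * Pmat p δ₁ δ₂ ^ c.val) ∧
    (∀ c c' : ZMod 2,
      Pmat p δ₁ δ₂ ^ c.val * Qmat p ε δ₁ δ₂ δ₃ ^ c'.val =
        Qmat p ε δ₁ δ₂ δ₃ ^ c'.val * Pmat p δ₁ δ₂ ^ c.val) ∧
    (∀ c c' : ZMod 2,
      Pmat p δ₁ δ₂ ^ c'.val *
          (Qmat p ε δ₁ δ₂ δ₃ ^ (c + c').val * (Rmat p δ₁ δ₄ ^ (c + c').val)⁻¹ -
            Qmat p ε δ₁ δ₂ δ₃ ^ c'.val * (Rmat p δ₁ δ₄ ^ c'.val)⁻¹) =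
        Qmat p ε δ₁ δ₂ δ₃ ^ c.val * (Rmat p δ₁ δ₄ ^ c.val)⁻¹ - 1) := by
  haveI := Fact.mk hp
  have h2 : (2 : ZMod p) ≠ 0 := by
    have hp2 : p ≠ 2 := by rintro rfl; simp [Nat.odd_iff] at hodd
    have hd : ¬ p ∣ 2 := fun h =>
      hp2 ((Nat.prime_dvd_prime_iff_eq hp Nat.prime_two).mp h)
    simpa using (not_iff_not.mpr (ZMod.natCast_eq_zero_iff 2 p)).mpr hd
  have hR2 : Rmat p δ₁ δ₄ * Rmat p δ₁ δ₄ = 1 := by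
    ext i j
    fin_cases i <;> fin_cases j <;>
      simp [Rmat, Matrix.mul_apply, Fin.sum_univ_three, Matrix.one_apply,
        Matrix.vecHead, Matrix.vecTail]
  have hRinv : (Rmat p δ₁ δ₄)⁻¹ = Rmat p δ₁ δ₄ := Matrix.inv_eq_right_inv hR2
  have hcc : ∀ c : ZMod 2, c = 0 ∨ c = 1 := by decide
  have hv0 : (0 : ZMod 2).val = 0 := rfl
  have hv1 : (1 : ZMod 2).val = 1 := rfl
  refine ⟨?_, ?_, ?_, ?_⟩
  · intro x c
    rcases hcc c with rfl | rfl
    · simp [hv0]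
    · rw [hv1, pow_one, pow_one, hRinv]
      ext i j
      rcases hε with rfl | rfl <;> fin_cases i <;> fin_cases j <;>
        (simp [Qmat, Rmat, lamMat, Matrix.mul_apply, Matrix.mulVec, dotProduct,
          Fin.sum_univ_three, Matrix.vecHead, Matrix.vecTail]; try field_simp [h2]) <;>
        try ring
  · intro x c
    rcases hcc c with rfl | rfl
    · simp [hv0]
    · rw [hv1, pow_one]
      ext i j
      fin_cases i <;> fin_cases j <;>
        (simp [Pmat, lamMat, Matrix.mul_apply, Fin.sum_univ_three,
          Matrix.vecHead, Matrix.vecTail]; try field_simp [h2]) <;> try ring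
  · intro c c'
    rcases hcc c with rfl | rfl <;> rcases hcc c' with rfl | rfl <;>
      simp only [hv0, hv1, pow_zero, pow_one, one_mul, mul_one]
    ext i j
    rcases hε with rfl | rfl <;> fin_cases i <;> fin_cases j <;>
      (simp [Pmat, Qmat, Matrix.mul_apply, Fin.sum_univ_three,
        Matrix.vecHead, Matrix.vecTail]; try field_simp [h2]) <;> try ring
  · intro c c'
    rcases hcc c with rfl | rfl <;> rcases hcc c' with rfl | rfl
    · simp only [show ((0:ZMod 2) + 0).val = 0 from rfl, hv0, pow_zero, inv_one,
        mul_one, sub_self, mul_zero]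
    · simp only [show ((0:ZMod 2) + 1).val = 1 from rfl, hv0, hv1, pow_zero, pow_one,
        inv_one, mul_one, hRinv, sub_self, mul_zero]
    · simp only [show ((1:ZMod 2) + 0).val = 1 from rfl, hv0, hv1, pow_zero, pow_one,
        inv_one, mul_one, one_mul, hRinv]
    · simp only [show ((1:ZMod 2) + 1).val = 0 from rfl, hv1,
        pow_zero, pow_one, inv_one, one_mul, mul_one, hRinv]
      rcases hε with rfl | rfl <;>
        (simp only [Pmat, Qmat, Rmat, Matrix.mul_fin_three, Matrix.one_fin_three];
         ext i j;
         fin_cases i <;> fin_cases j <;>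
           (simp [Matrix.sub_apply, Matrix.vecHead, Matrix.vecTail];
            try field_simp [h2]) <;> try ring)
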